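/- arXiv:1801.05265 — 7 statements merged into one kernel-verified Lean document; each statement's English description precedes it below -/
import Mathlib

section
/- Let G be a finite set, μ : 2^G → ℝ, and let m : 2^G → ℝ be its Möbius representation, i.e. μ(S) = Σ_{R ⊆ S} m(R) for all S ⊆ G. Then μ is a capacity (μ(∅) = 0, μ(G) = 1, and μ(R) ≤ μ(S) whenever R ⊆ S ⊆ G) if and only if m satisfies: (i) m(∅) = 0; (ii) Σ_{T ⊆ G} m(T) = 1; (iii) for every i ∈ G and every S ⊆ G∖{i}, Σ_{T ⊆ S} m(T ∪ {i}) ≥ 0. -/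
lemma mobius_insert_split {ι : Type*} [DecidableEq ι] (m : Finset ι → ℝ)
    {i : ι} {S : Finset ι} (hi : i ∉ S) :
    ∑ R ∈ (insert i S).powerset, m R
      = ∑ R ∈ S.powerset, m R + ∑ T ∈ S.powerset, m (insert i T) := by
  rw [Finset.powerset_insert, Finset.sum_union, Finset.sum_image]
  · intro T₁ h₁ T₂ h₂ h
    have hi₁ : i ∉ T₁ := fun hx => hi (Finset.mem_powerset.mp h₁ hx)
    have hi₂ : i ∉ T₂ := fun hx => hi (Finset.mem_powerset.mp h₂ hx)
    have := congrArg (fun X => Finset.erase X i) h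
    simpa [Finset.erase_insert hi₁, Finset.erase_insert hi₂] using this
  · rw [Finset.disjoint_left]
    intro R hR hR'
    have hiR : i ∉ R := fun hx => hi (Finset.mem_powerset.mp hR hx)
    obtain ⟨T, _, rfl⟩ := Finset.mem_image.mp hR'
    exact hiR (Finset.mem_insert_self i T)

/-- `μ` is a capacity iff its Möbius representation `m` satisfies
(i) `m ∅ = 0`, (ii) `∑_{T ⊆ G} m T = 1`, (iii) for all `i` and `S ⊆ G \ {i}`,
`∑_{T ⊆ S} m (T ∪ {i}) ≥ 0`. -/
theorem capacity_iff_mobius_conditions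
    {ι : Type*} [Fintype ι] [DecidableEq ι] (μ m : Finset ι → ℝ)
    (hm : ∀ S : Finset ι, μ S = ∑ R ∈ S.powerset, m R) :
    (μ ∅ = 0 ∧ μ Finset.univ = 1 ∧ ∀ R S : Finset ι, R ⊆ S → μ R ≤ μ S) ↔
    (m ∅ = 0 ∧ (∑ T : Finset ι, m T) = 1 ∧
      ∀ i : ι, ∀ S : Finset ι, S ⊆ Finset.univ.erase i →
        0 ≤ ∑ T ∈ S.powerset, m (insert i T)) := by
  have hempty : μ ∅ = m ∅ := by simp [hm ∅]
  have huniv : μ Finset.univ = ∑ T : Finset ι, m T := by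
    rw [hm]; rw [Finset.powerset_univ]
  constructor
  · rintro ⟨h0, h1, hmono⟩
    refine ⟨by rw [← hempty]; exact h0, by rw [← huniv]; exact h1, ?_⟩
    intro i S hS
    have hiS : i ∉ S := fun hx => (Finset.mem_erase.mp (hS hx)).1 rfl
    have := hmono S (insert i S) (Finset.subset_insert i S)
    have hsum := mobius_insert_split m hiS
    rw [hm S, hm (insert i S)] at this
    linarith [this, hsum ▸ this]
  · rintro ⟨h0, h1, h3⟩
    refine ⟨by rw [hempty]; exact h0, by rw [huniv]; exact h1, ?_⟩
    have step : ∀ (a : ι) (X : Finset ι), μ X ≤ μ (insert a X) := by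
      intro a X
      by_cases haX : a ∈ X
      · rw [Finset.insert_eq_self.mpr haX]
      · have hX : X ⊆ Finset.univ.erase a := by
          intro x hx
          exact Finset.mem_erase.mpr ⟨fun h => haX (h ▸ hx), Finset.mem_univ x⟩
        have := h3 a X hX
        rw [hm X, hm (insert a X), mobius_insert_split m haX]
        linarith
    have key : ∀ (A : Finset ι) (R : Finset ι), μ R ≤ μ (R ∪ A) := by
      intro A
      induction A using Finset.induction_on with
      | empty => intro R; simp
      | insert _ _ h ih =>
        rename_i a A
        intro R
        calc μ R ≤ μ (R ∪ A) := ih R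
          _ ≤ μ (insert a (R ∪ A)) := step a (R ∪ A)
          _ = μ (R ∪ insert a A) := by rw [Finset.union_insert]
    intro R S hRS
    have : R ∪ S = S := Finset.union_eq_right.mpr hRS
    calc μ R ≤ μ (R ∪ S) := key S R
      _ = μ S := by rw [this]
end

section
/- Let μ be a capacity on a finite set G = {g_1,…,g_n} with Möbius representation m, and let x : G → ℝ with x_i ≥ 0 for all i. Let σ be any permutation of {1,…,n} with 0 = x_{σ(0)} ≤ x_{σ(1)} ≤ … ≤ x_{σ(n)} (where x_{σ(0)} := 0). Then Σ_{i=1}^{n} (x_{σ(i)} − x_{σ(i−1)}) · μ({σ(i),…,σ(n)}) = Σ_{∅ ≠ T ⊆ G} m(T) · min_{g_i ∈ T} x_i; that is, the Choquet integral of x with respect to μ equals its Möbius-representation expression. -/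
/-- The Choquet integral of a vector `x` w.r.t. a set function `μ`, computed from a
sorting permutation `σ` of the indices `{1,…,n}` (here `Fin n`):
`∑_{i=1}^{n} (x_{σ(i)} − x_{σ(i−1)}) · μ({σ(i),…,σ(n)})` with `x_{σ(0)} := 0`. -/
noncomputable def choquet {n : ℕ} (μ : Finset (Fin n) → ℝ) (x : Fin n → ℝ)
    (σ : Equiv.Perm (Fin n)) : ℝ :=
  ∑ i : Fin n,
    (x (σ i) - (if (i : ℕ) = 0 then 0 else
      x (σ ⟨(i : ℕ) - 1, Nat.lt_of_le_of_lt (Nat.pred_le _) i.isLt⟩))) *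
    μ ((Finset.univ.filter fun j : Fin n => i ≤ j).image fun j => σ j)

/-- `∑_{∅ ≠ T ⊆ G} m(T) · min_{g_i ∈ T} x_i`. -/
noncomputable def mobiusMinSum {n : ℕ} (m : Finset (Fin n) → ℝ) (x : Fin n → ℝ) : ℝ :=
  ∑ T : Finset (Fin n), if h : T.Nonempty then m T * T.inf' h x else 0

/-- the Choquet integral of a nonnegative vector equals its
Möbius-representation expression. -/
theorem choquet_eq_mobiusMinSum {n : ℕ} (μ m : Finset (Fin n) → ℝ)
    (h0 : μ ∅ = 0) (h1 : μ Finset.univ = 1)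
    (hmono : ∀ R S : Finset (Fin n), R ⊆ S → μ R ≤ μ S)
    (hm : ∀ S : Finset (Fin n), μ S = ∑ R ∈ S.powerset, m R)
    (x : Fin n → ℝ) (hx : ∀ i, 0 ≤ x i)
    (σ : Equiv.Perm (Fin n)) (hσ : ∀ i j : Fin n, i ≤ j → x (σ i) ≤ x (σ j)) :
    choquet μ x σ = mobiusMinSum m x := by
  classical
  unfold choquet mobiusMinSum
  set f : Fin n → ℝ := fun i => x (σ i) - (if (i : ℕ) = 0 then 0 else
      x (σ ⟨(i : ℕ) - 1, Nat.lt_of_le_of_lt (Nat.pred_le _) i.isLt⟩)) with hf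
  set S : Fin n → Finset (Fin n) := fun i =>
    (Finset.univ.filter fun j : Fin n => i ≤ j).image fun j => σ j with hS
  have hm0 : m ∅ = 0 := by
    have h := hm ∅
    simp [h0] at h
    linarith
  -- telescoping key
  have key : ∀ k : Fin n, (∑ i : Fin n, if i ≤ k then f i else 0) = x (σ k) := by
    intro k
    set Y : ℕ → ℝ := fun j => if h : 0 < j ∧ j ≤ n then x (σ ⟨j - 1, by omega⟩) else 0 with hY
    have hstep : ∀ j (hj : j < n), f ⟨j, hj⟩ = Y (j + 1) - Y j := by
      intro j hj
      simp only [hf, hY]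
      rcases Nat.eq_zero_or_pos j with rfl | hpos
      · rw [if_pos rfl, dif_pos (show 0 < 0 + 1 ∧ 0 + 1 ≤ n by omega), dif_neg (by omega)]
      · rw [if_neg (by omega), dif_pos (show 0 < j + 1 ∧ j + 1 ≤ n by omega),
          dif_pos (⟨hpos, hj.le⟩ : 0 < j ∧ j ≤ n)]
        simp
    set g : ℕ → ℝ := fun j => if h : j < n ∧ j ≤ (k : ℕ) then f ⟨j, h.1⟩ else 0 with hg
    have e1 : (∑ i : Fin n, if i ≤ k then f i else 0) = ∑ i : Fin n, g (i : ℕ) := by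
      refine Finset.sum_congr rfl fun i _ => ?_
      by_cases h : i ≤ k
      · have h' : (i : ℕ) < n ∧ (i : ℕ) ≤ (k : ℕ) := ⟨i.isLt, h⟩
        rw [if_pos h]
        simp only [hg, dif_pos h']
      · have h' : ¬((i : ℕ) < n ∧ (i : ℕ) ≤ (k : ℕ)) := fun hh => h hh.2
        rw [if_neg h]
        simp only [hg, dif_neg h']
    have e2 : (∑ i : Fin n, g (i : ℕ)) = ∑ j ∈ Finset.range n, g j :=
      Fin.sum_univ_eq_sum_range g n
    have e3 : (∑ j ∈ Finset.range n, g j) = ∑ j ∈ Finset.range ((k : ℕ) + 1), g j := by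
      refine (Finset.sum_subset (Finset.range_subset_range.2 k.isLt) fun j hj hnot => ?_).symm
      simp only [Finset.mem_range, not_lt] at hnot
      simp only [hg, dif_neg (show ¬(j < n ∧ j ≤ (k : ℕ)) by omega)]
    have e4 : (∑ j ∈ Finset.range ((k : ℕ) + 1), g j)
        = ∑ j ∈ Finset.range ((k : ℕ) + 1), (Y (j + 1) - Y j) := by
      refine Finset.sum_congr rfl fun j hj => ?_
      simp only [Finset.mem_range] at hj
      have hjn : j < n := lt_of_lt_of_le hj k.isLt
      simp only [hg, dif_pos (show j < n ∧ j ≤ (k : ℕ) from ⟨hjn, by omega⟩), hstep j hjn]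
    rw [e1, e2, e3, e4, Finset.sum_range_sub Y ((k : ℕ) + 1)]
    simp only [hY, dif_neg (show ¬(0 < 0 ∧ 0 ≤ n) by omega),
      dif_pos (show 0 < (k : ℕ) + 1 ∧ (k : ℕ) + 1 ≤ n from ⟨Nat.succ_pos _, k.isLt⟩)]
    simp
  calc (∑ i : Fin n, f i * μ (S i))
      = ∑ i : Fin n, ∑ T : Finset (Fin n), (if T ⊆ S i then f i * m T else 0) := by
        refine Finset.sum_congr rfl fun i _ => ?_
        rw [hm, Finset.mul_sum, ← Finset.sum_filter]
        congr 1
        ext T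
        simp [Finset.mem_powerset]
    _ = ∑ T : Finset (Fin n), ∑ i : Fin n, (if T ⊆ S i then f i * m T else 0) :=
        Finset.sum_comm
    _ = ∑ T : Finset (Fin n), m T * ∑ i : Fin n, (if T ⊆ S i then f i else 0) := by
        refine Finset.sum_congr rfl fun T _ => ?_
        rw [Finset.mul_sum]
        refine Finset.sum_congr rfl fun i _ => ?_
        by_cases h : T ⊆ S i <;> simp [h, mul_comm]
    _ = ∑ T : Finset (Fin n), if h : T.Nonempty then m T * T.inf' h x else 0 := by
        refine Finset.sum_congr rfl fun T _ => ?_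
        by_cases hT : T.Nonempty
        · rw [dif_pos hT]
          set k : Fin n := T.inf' hT (fun t => σ.symm t) with hk
          obtain ⟨t0, ht0, hk0⟩ := T.exists_mem_eq_inf' hT (fun t => σ.symm t)
          have hkT : σ k ∈ T := by
            rw [hk, hk0]
            simpa using ht0
          have hsub : ∀ i : Fin n, T ⊆ S i ↔ i ≤ k := by
            intro i
            constructor
            · intro h
              have := h hkT
              rw [hS] at this
              simp only [Finset.mem_image, Finset.mem_filter, Finset.mem_univ, true_and] at this
              obtain ⟨j, hij, hji⟩ := this
              have hjk : j = k := σ.injective hji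
              exact hjk ▸ hij
            · intro hik t ht
              rw [hS]
              simp only [Finset.mem_image, Finset.mem_filter, Finset.mem_univ, true_and]
              exact ⟨σ.symm t, le_trans hik (Finset.inf'_le _ ht), σ.apply_symm_apply t⟩
          have hmin : x (σ k) = T.inf' hT x := by
            refine le_antisymm ?_ (Finset.inf'_le x hkT)
            refine Finset.le_inf' hT x fun t ht => ?_
            have := hσ k (σ.symm t) (Finset.inf'_le _ ht)
            simpa using this
          rw [show (∑ i : Fin n, if T ⊆ S i then f i else 0)
              = ∑ i : Fin n, if i ≤ k then f i else 0 from
            Finset.sum_congr rfl fun i _ => if_congr (hsub i) rfl rfl]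
          rw [key k, hmin]
        · rw [dif_neg hT]
          rw [Finset.not_nonempty_iff_eq_empty.1 hT, hm0, zero_mul]
end

section
/- Let μ be a capacity on a finite set G with Möbius representation m. Then for every g_i ∈ G, the Shapley value of g_i equals its Möbius expression: Σ_{T ⊆ G∖{g_i}} [(|G∖T|−1)! · |T|! / |G|!] · (μ(T ∪ {g_i}) − μ(T)) = Σ_{A : g_i ∈ A ⊆ G} m(A)/|A|. -/
open Finset

private lemma hockey (m r : ℕ) :
    ∑ k ∈ range (m+1), (k+r).choose r = (m+r+1).choose (r+1) := by
  rw [← Nat.sum_Icc_choose (m+r) r]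
  have h : Icc r (m+r) = Ico r (m+r+1) := by
    rw [Finset.Ico_add_one_right_eq_Icc]
  rw [h, Finset.sum_Ico_eq_sum_range]
  have h2 : m + r + 1 - r = m + 1 := by omega
  rw [h2]
  exact Finset.sum_congr rfl fun k _ => by rw [add_comm]

private lemma natA (m r : ℕ) :
    ∑ k ∈ range (m+1), m.choose k * ((m-k).factorial * (k+r).factorial)
      = m.factorial * r.factorial * (m+r+1).choose (r+1) := by
  have h : ∀ k ∈ range (m+1), m.choose k * ((m-k).factorial * (k+r).factorial)
      = m.factorial * r.factorial * (k+r).choose r := by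
    intro k hk
    rw [mem_range, Nat.lt_succ_iff] at hk
    have h1 := Nat.choose_mul_factorial_mul_factorial hk
    have h2 := Nat.choose_mul_factorial_mul_factorial (Nat.le_add_left r k)
    rw [Nat.add_sub_cancel] at h2
    calc m.choose k * ((m-k).factorial * (k+r).factorial)
        = m.choose k * ((m-k).factorial * ((k+r).choose r * r.factorial * k.factorial)) := by
          rw [h2]
      _ = (m.choose k * k.factorial * (m-k).factorial) * r.factorial * (k+r).choose r := by
          ring
      _ = m.factorial * r.factorial * (k+r).choose r := by rw [h1]
  rw [Finset.sum_congr rfl h, ← Finset.mul_sum, hockey]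

private lemma keyR (m r : ℕ) :
    ∑ j ∈ range (m+1), (m.choose j : ℝ) * ((m-j).factorial * (j+r).factorial)
      = ((m+r+1).factorial : ℝ) / (r+1) := by
  have hA : ((∑ k ∈ range (m+1), m.choose k * ((m-k).factorial * (k+r).factorial) : ℕ) : ℝ)
      = ((m.factorial * r.factorial * (m+r+1).choose (r+1) : ℕ) : ℝ) := by
    norm_cast; exact natA m r
  push_cast at hA
  rw [hA]
  have h2 : r + 1 ≤ m + r + 1 := by omega
  have h3 := Nat.choose_mul_factorial_mul_factorial h2
  have h4 : m + r + 1 - (r + 1) = m := by omega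
  rw [h4, Nat.factorial_succ] at h3
  have h3R : ((m+r+1).choose (r+1) : ℝ) * ((r+1) * r.factorial) * m.factorial
      = ((m+r+1).factorial : ℝ) := by exact_mod_cast h3
  have hr : (r : ℝ) + 1 ≠ 0 := by positivity
  field_simp
  push_cast at h3R ⊢
  linarith [h3R]

private lemma coeff_sum {ι : Type*} [Fintype ι] [DecidableEq ι] (i : ι) (R : Finset ι)
    (hR : R ⊆ Finset.univ.erase i) :
    ∑ T ∈ (Finset.univ.erase i).powerset.filter (fun T => R ⊆ T),
      (((Finset.univ \ T).card - 1).factorial * T.card.factorial : ℝ)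
        / ((Fintype.card ι).factorial : ℝ)
      = 1 / (R.card + 1) := by
  classical
  set n := Fintype.card ι with hn
  set E := Finset.univ.erase i with hE
  have hEcard : E.card = n - 1 := by
    simp [hE, hn, Finset.card_erase_of_mem, Finset.card_univ]
  have hn1 : 1 ≤ n := Fintype.card_pos_iff.2 ⟨i⟩
  have hRcard : R.card ≤ n - 1 := hEcard ▸ Finset.card_le_card hR
  set r := R.card with hr
  set m := (E \ R).card with hm
  have hmval : m = n - 1 - r := by rw [hm, Finset.card_sdiff_of_subset hR, hEcard]
  -- reindex: T = S ∪ R with S ⊆ E \ R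
  rw [Finset.sum_nbij' (i := fun T => T \ R) (j := fun S => S ∪ R)
    (s := (E.powerset.filter (fun T => R ⊆ T))) (t := (E \ R).powerset)
    (hi := ?_) (hj := ?_) (left_neg := ?_) (right_neg := ?_) (h := ?_)]
  · -- the reindexed sum
    have hcongr : ∀ S ∈ (E \ R).powerset,
        (((Finset.univ \ (S ∪ R)).card - 1).factorial * (S ∪ R).card.factorial : ℝ)
          / (n.factorial : ℝ)
        = ((m - S.card).factorial * (S.card + r).factorial : ℝ) / (n.factorial : ℝ) := by
      intro S hS
      rw [Finset.mem_powerset] at hS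
      have hdisj : Disjoint S R := Finset.disjoint_of_subset_left hS Finset.sdiff_disjoint
      have hcard : (S ∪ R).card = S.card + r := by
        rw [Finset.card_union_of_disjoint hdisj]
      have hSm : S.card ≤ m := hm ▸ Finset.card_le_card hS
      have hsub : (Finset.univ \ (S ∪ R)).card = n - (S.card + r) := by
        rw [Finset.card_sdiff_of_subset (Finset.subset_univ _), Finset.card_univ, hcard]
      have hiE : S ∪ R ⊆ E := Finset.union_subset (hS.trans Finset.sdiff_subset) hR
      have hle : S.card + r ≤ n - 1 := by
        calc S.card + r = (S ∪ R).card := hcard.symm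
          _ ≤ E.card := Finset.card_le_card hiE
          _ = n - 1 := hEcard
      have : n - (S.card + r) - 1 = m - S.card := by omega
      rw [hcard, hsub, this]
    rw [Finset.sum_congr rfl hcongr]
    have hstep : ∑ S ∈ (E \ R).powerset,
        ((m - S.card).factorial * (S.card + r).factorial : ℝ) / (n.factorial : ℝ)
        = ∑ j ∈ range (m+1),
            (m.choose j) • (((m - j).factorial * (j + r).factorial : ℝ) / (n.factorial : ℝ)) :=
      Finset.sum_powerset_apply_card
        (fun j => ((m - j).factorial * (j + r).factorial : ℝ) / (n.factorial : ℝ))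
    rw [hstep]
    have hsum : ∑ j ∈ range (m+1),
        (m.choose j) • (((m - j).factorial * (j + r).factorial : ℝ) / (n.factorial : ℝ))
        = (∑ j ∈ range (m+1), (m.choose j : ℝ) * ((m-j).factorial * (j+r).factorial))
            / (n.factorial : ℝ) := by
      rw [Finset.sum_div]
      exact Finset.sum_congr rfl fun j _ => by
        rw [nsmul_eq_mul]; ring
    rw [hsum, keyR]
    have hmrn : m + r + 1 = n := by omega
    rw [hmrn]
    have hfac : (n.factorial : ℝ) ≠ 0 := by positivity
    have hr1 : (r : ℝ) + 1 ≠ 0 := by positivity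
    field_simp
  · intro T hT
    rw [Finset.mem_filter, Finset.mem_powerset] at hT
    rw [Finset.mem_powerset]
    exact Finset.sdiff_subset_sdiff hT.1 (le_refl _)
  · intro S hS
    rw [Finset.mem_powerset] at hS
    rw [Finset.mem_filter, Finset.mem_powerset]
    exact ⟨Finset.union_subset (hS.trans Finset.sdiff_subset) hR, Finset.subset_union_right⟩
  · intro T hT
    rw [Finset.mem_filter] at hT
    exact Finset.sdiff_union_of_subset hT.2
  · intro S hS
    rw [Finset.mem_powerset] at hS
    have hdisj : Disjoint S R := Finset.disjoint_of_subset_left hS Finset.sdiff_disjoint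
    exact Finset.union_sdiff_cancel_right hdisj
  · intro T hT
    rw [Finset.mem_filter] at hT
    rw [Finset.sdiff_union_of_subset hT.2]



/-- The Shapley value of a criterion `i` with respect to a set function `μ`:
`∑_{T ⊆ G∖{i}} [(|G∖T|−1)! |T|! / |G|!] (μ(T∪{i}) − μ(T))`. -/
noncomputable def shapley {ι : Type*} [Fintype ι] [DecidableEq ι]
    (μ : Finset ι → ℝ) (i : ι) : ℝ :=
  ∑ T ∈ (Finset.univ.erase i).powerset,
    (((Finset.univ \ T).card - 1).factorial * T.card.factorial : ℝ)
      / ((Fintype.card ι).factorial : ℝ) * (μ (insert i T) - μ T)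

/-- the Shapley value of `g_i` equals `∑_{A : g_i ∈ A ⊆ G} m(A)/|A|`. -/
theorem shapley_eq_mobius_expr {ι : Type*} [Fintype ι] [DecidableEq ι]
    (μ m : Finset ι → ℝ)
    (h0 : μ ∅ = 0) (h1 : μ Finset.univ = 1)
    (hmono : ∀ R S : Finset ι, R ⊆ S → μ R ≤ μ S)
    (hm : ∀ S : Finset ι, μ S = ∑ R ∈ S.powerset, m R) (i : ι) :
    shapley μ i
      = ∑ A ∈ Finset.univ.powerset.filter (fun A : Finset ι => i ∈ A),
          m A / (A.card : ℝ) := by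
  classical
  set E := Finset.univ.erase i with hE
  set c : Finset ι → ℝ := fun T =>
    (((Finset.univ \ T).card - 1).factorial * T.card.factorial : ℝ)
      / ((Fintype.card ι).factorial : ℝ) with hc
  -- Step 1: marginal contribution in terms of Möbius
  have step1 : ∀ T ∈ E.powerset, μ (insert i T) - μ T = ∑ R ∈ T.powerset, m (insert i R) := by
    intro T hT
    rw [Finset.mem_powerset] at hT
    have hiT : i ∉ T := fun h => (Finset.mem_erase.1 (hT h)).1 rfl
    have hdisj : Disjoint T.powerset (T.powerset.image (insert i)) := by
      rw [Finset.disjoint_left]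
      intro A hA hA'
      rw [Finset.mem_image] at hA'
      obtain ⟨B, _, hB⟩ := hA'
      rw [Finset.mem_powerset] at hA
      exact hiT (hA (hB ▸ Finset.mem_insert_self i B))
    have hinj : ∀ A ∈ T.powerset, ∀ B ∈ T.powerset, insert i A = insert i B → A = B := by
      intro A hA B hB hAB
      rw [Finset.mem_powerset] at hA hB
      have hiA : i ∉ A := fun h => hiT (hA h)
      have hiB : i ∉ B := fun h => hiT (hB h)
      rw [← Finset.erase_insert hiA, ← Finset.erase_insert hiB, hAB]
    rw [hm, hm, Finset.powerset_insert, Finset.sum_union hdisj, Finset.sum_image hinj]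
    ring
  have hsh : shapley μ i = ∑ T ∈ E.powerset, ∑ R ∈ T.powerset, c T * m (insert i R) := by
    unfold shapley
    refine Finset.sum_congr rfl fun T hT => ?_
    rw [step1 T hT, Finset.mul_sum]
  -- Step 2: swap sums
  have hswap : ∑ T ∈ E.powerset, ∑ R ∈ T.powerset, c T * m (insert i R)
      = ∑ R ∈ E.powerset, ∑ T ∈ E.powerset.filter (fun T => R ⊆ T), c T * m (insert i R) := by
    refine Finset.sum_comm' ?_
    intro T R
    simp only [Finset.mem_powerset, Finset.mem_filter]
    constructor
    · rintro ⟨h1, h2⟩; exact ⟨⟨h1, h2⟩, h2.trans h1⟩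
    · rintro ⟨⟨h1, h2⟩, _⟩; exact ⟨h1, h2⟩
  -- Step 3: inner sum of coefficients
  have hinner : ∀ R ∈ E.powerset,
      ∑ T ∈ E.powerset.filter (fun T => R ⊆ T), c T * m (insert i R)
        = m (insert i R) / (R.card + 1) := by
    intro R hR
    rw [Finset.mem_powerset] at hR
    rw [← Finset.sum_mul, coeff_sum i R hR]
    ring
  rw [hsh, hswap, Finset.sum_congr rfl hinner]
  -- Step 4: reindex A = insert i R
  refine Finset.sum_nbij' (i := fun R => insert i R) (j := fun A => A.erase i)
    ?_ ?_ ?_ ?_ ?_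
  · intro R hR
    rw [Finset.mem_powerset] at hR
    rw [Finset.mem_filter, Finset.mem_powerset]
    exact ⟨Finset.subset_univ _, Finset.mem_insert_self i R⟩
  · intro A hA
    rw [Finset.mem_filter] at hA
    rw [Finset.mem_powerset]
    exact Finset.erase_subset_erase i (Finset.subset_univ A)
  · intro R hR
    rw [Finset.mem_powerset] at hR
    have hiR : i ∉ R := fun h => (Finset.mem_erase.1 (hR h)).1 rfl
    exact Finset.erase_insert hiR
  · intro A hA
    rw [Finset.mem_filter] at hA
    exact Finset.insert_erase hA.2
  · intro R hR
    rw [Finset.mem_powerset] at hR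
    have hiR : i ∉ R := fun h => (Finset.mem_erase.1 (hR h)).1 rfl
    rw [Finset.card_insert_of_notMem hiR]
    push_cast
    ring
end

section
/- Let μ be a 2-additive capacity on a finite set G = {g_1,…,g_n} with Möbius representation m (so m(T) = 0 whenever |T| > 2), and let x : G → ℝ be nonnegative. Then the Choquet integral of x with respect to μ equals C_μ(x) = Σ_{g_i ∈ G} m({g_i}) · x_i + Σ_{{g_i,g_j} ⊆ G, i ≠ j} m({g_i,g_j}) · min(x_i, x_j). -/
lemma choquet_mobius {n : ℕ} (μ m : Finset (Fin n) → ℝ)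
    (hm : ∀ S : Finset (Fin n), μ S = ∑ R ∈ S.powerset, m R) (hm0 : m ∅ = 0)
    (x : Fin n → ℝ) (σ : Equiv.Perm (Fin n))
    (hσ : ∀ i j : Fin n, i ≤ j → x (σ i) ≤ x (σ j)) :
    choquet μ x σ = ∑ R : Finset (Fin n),
      m R * (if h : R.Nonempty then R.inf' h x else 0) := by
  classical
  set Δ : Fin n → ℝ := fun i => x (σ i) - (if (i : ℕ) = 0 then 0 else
      x (σ ⟨(i : ℕ) - 1, Nat.lt_of_le_of_lt (Nat.pred_le _) i.isLt⟩)) with hΔ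
  set S : Fin n → Finset (Fin n) := fun i =>
    (Finset.univ.filter fun j : Fin n => i ≤ j).image fun j => σ j with hSdef
  have hmemS : ∀ (i t : Fin n), t ∈ S i ↔ i ≤ σ.symm t := by
    intro i t
    simp only [hSdef, Finset.mem_image, Finset.mem_filter, Finset.mem_univ, true_and]
    constructor
    · rintro ⟨j, hij, rfl⟩; simpa using hij
    · intro h; exact ⟨σ.symm t, h, by simp⟩
  -- telescoping sum
  have htel : ∀ k : Fin n, (∑ i ∈ Finset.univ.filter (· ≤ k), Δ i) = x (σ k) := by
    intro k
    have hkn : (k : ℕ) < n := k.isLt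
    set f : ℕ → ℝ := fun j => if h : 0 < j ∧ j ≤ n then x (σ ⟨j - 1, by omega⟩) else 0
      with hf
    have hstep : ∀ i : Fin n, Δ i = f ((i : ℕ) + 1) - f (i : ℕ) := by
      intro i
      have h1 : f ((i : ℕ) + 1) = x (σ i) := by
        simp only [hf]
        rw [dif_pos ⟨Nat.succ_pos _, i.isLt⟩]
        exact congrArg (fun t => x (σ t)) (Fin.ext rfl)
      by_cases h0' : (i : ℕ) = 0
      · have h3 : f (i : ℕ) = 0 := by simp [hf, h0']
        simp only [hΔ]
        rw [if_pos h0', h1, h3]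
      · have h2 : f (i : ℕ) = x (σ ⟨(i : ℕ) - 1,
            Nat.lt_of_le_of_lt (Nat.pred_le _) i.isLt⟩) := by
          simp only [hf]
          rw [dif_pos ⟨Nat.pos_of_ne_zero h0', le_of_lt i.isLt⟩]
        simp only [hΔ]
        rw [if_neg h0', h1, h2]
    set g : ℕ → ℝ := fun j => if j ≤ (k : ℕ) then f (j + 1) - f j else 0 with hg
    have e1 : (∑ i ∈ Finset.univ.filter (· ≤ k), Δ i) = ∑ i : Fin n, g (i : ℕ) := by
      rw [Finset.sum_filter]
      refine Finset.sum_congr rfl fun i _ => ?_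
      by_cases h : i ≤ k
      · rw [if_pos h, hstep i, hg]
        simp [Fin.le_def.mp h]
      · rw [if_neg h, hg]
        simp only
        rw [if_neg (by rw [Fin.le_def] at h; omega)]
    rw [e1, Fin.sum_univ_eq_sum_range]
    have e2 : (∑ j ∈ Finset.range n, g j) = ∑ j ∈ Finset.range ((k : ℕ) + 1), g j := by
      refine (Finset.sum_subset ?_ ?_).symm
      · intro j hj
        simp only [Finset.mem_range] at hj ⊢
        omega
      · intro j _ hj
        simp only [Finset.mem_range, not_lt] at hj
        simp only [hg]
        rw [if_neg (by omega)]
    rw [e2]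
    have e3 : (∑ j ∈ Finset.range ((k : ℕ) + 1), g j)
        = ∑ j ∈ Finset.range ((k : ℕ) + 1), (f (j + 1) - f j) := by
      refine Finset.sum_congr rfl fun j hj => ?_
      simp only [Finset.mem_range] at hj
      simp only [hg]
      rw [if_pos (by omega)]
    rw [e3, Finset.sum_range_sub]
    simp only [hf]
    rw [dif_pos ⟨Nat.succ_pos _, hkn⟩, dif_neg (by omega)]
    simp
  -- main computation
  have expand : choquet μ x σ = ∑ i : Fin n, ∑ R ∈ (S i).powerset, Δ i * m R := by
    unfold choquet
    refine Finset.sum_congr rfl fun i _ => ?_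
    rw [hm, Finset.mul_sum]
  rw [expand]
  have e4 : ∀ i : Fin n, (∑ R ∈ (S i).powerset, Δ i * m R)
      = ∑ R : Finset (Fin n), if R ⊆ S i then Δ i * m R else 0 := by
    intro i
    rw [← Finset.sum_filter]
    refine Finset.sum_congr ?_ fun _ _ => rfl
    ext R
    simp [Finset.mem_powerset]
  simp only [e4]
  rw [Finset.sum_comm]
  refine Finset.sum_congr rfl fun R _ => ?_
  by_cases hR : R.Nonempty
  · rw [dif_pos hR]
    have hne : (R.image σ.symm).Nonempty := hR.image _
    set k : Fin n := (R.image σ.symm).min' hne with hk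
    have hsub : ∀ i : Fin n, R ⊆ S i ↔ i ≤ k := by
      intro i
      constructor
      · intro h
        refine Finset.le_min' _ _ _ ?_
        intro y hy
        simp only [Finset.mem_image] at hy
        obtain ⟨t, ht, rfl⟩ := hy
        exact (hmemS i t).mp (h ht)
      · intro h t ht
        rw [hmemS]
        exact le_trans h (Finset.min'_le _ _ (Finset.mem_image_of_mem _ ht))
    have e5 : (∑ i : Fin n, if R ⊆ S i then Δ i * m R else 0)
        = ∑ i ∈ Finset.univ.filter (· ≤ k), Δ i * m R := by
      rw [Finset.sum_filter]
      exact Finset.sum_congr rfl fun i _ => by simp only [hsub i]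
    rw [e5, ← Finset.sum_mul, htel k]
    rw [mul_comm]
    congr 1
    -- x (σ k) = R.inf' hR x
    have hkR : σ k ∈ R := by
      have : k ∈ R.image σ.symm := Finset.min'_mem _ _
      simp only [Finset.mem_image] at this
      obtain ⟨t, ht, h⟩ := this
      rw [← h]; simpa using ht
    refine le_antisymm ?_ (Finset.inf'_le _ hkR)
    refine Finset.le_inf' _ _ fun t ht => ?_
    have : k ≤ σ.symm t := Finset.min'_le _ _ (Finset.mem_image_of_mem _ ht)
    simpa using hσ _ _ this
  · rw [dif_neg hR, mul_zero]
    rw [Finset.not_nonempty_iff_eq_empty] at hR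
    subst hR
    simp [hm0]


/-- for a 2-additive capacity, the Choquet integral equals
`∑_i m({g_i}) x_i + ∑_{{g_i,g_j} ⊆ G} m({g_i,g_j}) min(x_i,x_j)`. -/
theorem choquet_two_additive {n : ℕ} (μ m : Finset (Fin n) → ℝ)
    (h0 : μ ∅ = 0) (h1 : μ Finset.univ = 1)
    (hmono : ∀ R S : Finset (Fin n), R ⊆ S → μ R ≤ μ S)
    (hm : ∀ S : Finset (Fin n), μ S = ∑ R ∈ S.powerset, m R)
    (h2add : ∀ T : Finset (Fin n), 2 < T.card → m T = 0)
    (x : Fin n → ℝ) (hx : ∀ i, 0 ≤ x i)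
    (σ : Equiv.Perm (Fin n)) (hσ : ∀ i j : Fin n, i ≤ j → x (σ i) ≤ x (σ j)) :
    choquet μ x σ
      = (∑ i : Fin n, m {i} * x i)
        + ∑ T : Finset (Fin n),
            (if h : T.card = 2 then m T * T.inf' (Finset.card_pos.mp (by omega)) x
             else 0) := by
  classical
  have hm0 : m ∅ = 0 := by
    have h := (hm ∅).symm
    simpa [h0] using h
  rw [choquet_mobius μ m hm hm0 x σ hσ]
  set c : Finset (Fin n) → ℝ := fun R => if h : R.Nonempty then R.inf' h x else 0
    with hc
  have split : ∀ R : Finset (Fin n), m R * c R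
      = (if R.card = 1 then m R * c R else 0) + (if R.card = 2 then m R * c R else 0) := by
    intro R
    by_cases h1c : R.card = 1
    · rw [if_pos h1c, if_neg (by omega)]; ring
    · by_cases h2c : R.card = 2
      · rw [if_neg h1c, if_pos h2c]; ring
      · rw [if_neg h1c, if_neg h2c]
        rcases Nat.eq_zero_or_pos R.card with hz | hp
        · have : R = ∅ := Finset.card_eq_zero.mp hz
          subst this
          simp [hm0]
        · have : 2 < R.card := by omega
          simp [h2add R this]
  calc (∑ R : Finset (Fin n), m R * c R)
      = (∑ R : Finset (Fin n), if R.card = 1 then m R * c R else 0)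
        + ∑ R : Finset (Fin n), if R.card = 2 then m R * c R else 0 := by
        rw [← Finset.sum_add_distrib]
        exact Finset.sum_congr rfl fun R _ => split R
    _ = (∑ i : Fin n, m {i} * x i)
        + ∑ T : Finset (Fin n),
            (if h : T.card = 2 then m T * T.inf' (Finset.card_pos.mp (by omega)) x
             else 0) := by
        congr 1
        · rw [← Finset.sum_filter]
          refine (Finset.sum_bij (fun (a : Fin n) (_ : a ∈ Finset.univ) =>
            ({a} : Finset (Fin n))) ?_ ?_ ?_ ?_).symm
          · intro a _
            simp
          · intro a₁ _ a₂ _ h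
            exact Finset.singleton_injective h
          · intro R hR
            simp only [Finset.mem_filter] at hR
            obtain ⟨a, ha⟩ := Finset.card_eq_one.mp hR.2
            exact ⟨a, Finset.mem_univ a, ha.symm⟩
          · intro a _
            simp [hc]
        · refine Finset.sum_congr rfl fun T _ => ?_
          by_cases h : T.card = 2
          · have hne : T.Nonempty := Finset.card_pos.mp (by omega)
            rw [if_pos h, dif_pos h, hc]
            simp only
            rw [dif_pos hne]
          · rw [if_neg h, dif_neg h]
end

section
/- Let G be a finite set and m : 2^G → ℝ a function with m(∅) = 0 and m(T) = 0 for every T ⊆ G with |T| > 2, and define μ(S) = Σ_{R ⊆ S} m(R) for all S ⊆ G. Then μ is monotone (μ(R) ≤ μ(S) whenever R ⊆ S ⊆ G) if and only if for every g_i ∈ G one has m({g_i}) ≥ 0, and for every g_i ∈ G and every nonempty T ⊆ G∖{g_i} one has m({g_i}) + Σ_{g_j ∈ T} m({g_i,g_j}) ≥ 0. -/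
/-- Auxiliary: for `i ∉ S`, the sum of `m (insert i R)` over subsets `R ⊆ S`
reduces to `m {i} + ∑ j ∈ S, m {i, j}` when `m` is 2-additive. -/
lemma two_additive_insert_sum {ι : Type*} [DecidableEq ι]
    (m : Finset ι → ℝ)
    (h2add : ∀ T : Finset ι, 2 < T.card → m T = 0)
    {i : ι} {S : Finset ι} (hi : i ∉ S) :
    ∑ R ∈ S.powerset, m (insert i R) = m {i} + ∑ j ∈ S, m {i, j} := by
  classical
  set P : Finset (Finset ι) := insert ∅ (S.image (fun j => ({j} : Finset ι))) with hP
  have hPsub : P ⊆ S.powerset := by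
    intro R hR
    simp only [hP, Finset.mem_insert, Finset.mem_image] at hR
    rcases hR with rfl | ⟨j, hj, rfl⟩
    · simp
    · simp [Finset.singleton_subset_iff, hj]
  have hzero : ∀ R ∈ S.powerset, R ∉ P → m (insert i R) = 0 := by
    intro R hRS hRP
    have hRsub : R ⊆ S := Finset.mem_powerset.mp hRS
    have hRne : R ≠ ∅ := by
      intro h; apply hRP; simp [hP, h]
    have hcard : 2 ≤ R.card := by
      by_contra h
      push_neg at h
      interval_cases hc : R.card
      · exact hRne (Finset.card_eq_zero.mp hc)
      · obtain ⟨a, rfl⟩ := Finset.card_eq_one.mp hc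
        apply hRP
        simp only [hP, Finset.mem_insert, Finset.mem_image]
        exact Or.inr ⟨a, hRsub (Finset.mem_singleton_self a), rfl⟩
    apply h2add
    have hiR : i ∉ R := fun h => hi (hRsub h)
    rw [Finset.card_insert_of_notMem hiR]
    omega
  rw [← Finset.sum_subset hPsub hzero]
  have hne : (∅ : Finset ι) ∉ S.image (fun j => ({j} : Finset ι)) := by
    simp
  rw [hP, Finset.sum_insert hne, Finset.sum_image (by intro a _ b _ h; simpa using h)]
  simp

/-- Auxiliary: the one-step difference. -/
lemma mu_insert_diff {ι : Type*} [DecidableEq ι]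
    (m : Finset ι → ℝ) (h2add : ∀ T : Finset ι, 2 < T.card → m T = 0)
    (μ : Finset ι → ℝ)
    (hμ : ∀ S : Finset ι, μ S = ∑ R ∈ S.powerset, m R)
    {i : ι} {S : Finset ι} (hi : i ∉ S) :
    μ (insert i S) = μ S + (m {i} + ∑ j ∈ S, m {i, j}) := by
  rw [hμ, hμ, Finset.powerset_insert,
    Finset.sum_union, Finset.sum_image (by
      intro a ha b hb h
      have hia : i ∉ a := fun h' => hi (Finset.mem_powerset.mp ha h')
      have hib : i ∉ b := fun h' => hi (Finset.mem_powerset.mp hb h')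
      have := congrArg (fun t => Finset.erase t i) h
      simpa [Finset.erase_insert hia, Finset.erase_insert hib] using this
      ), two_additive_insert_sum m h2add hi]
  · rw [Finset.disjoint_left]
    intro R hR hR'
    simp only [Finset.mem_image] at hR'
    obtain ⟨a, _, rfl⟩ := hR'
    exact hi (Finset.mem_powerset.mp hR (Finset.mem_insert_self i a))

/-- for a 2-additive Möbius measure `m`, the induced set function
`μ(S) = ∑_{R ⊆ S} m(R)` is monotone iff `m({g_i}) ≥ 0` for all `g_i`, and
`m({g_i}) + ∑_{g_j ∈ T} m({g_i,g_j}) ≥ 0` for every `g_i` and nonempty `T ⊆ G∖{g_i}`. -/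
theorem two_additive_monotone_iff {ι : Type*} [Fintype ι] [DecidableEq ι]
    (m : Finset ι → ℝ)
    (hm0 : m ∅ = 0)
    (h2add : ∀ T : Finset ι, 2 < T.card → m T = 0)
    (μ : Finset ι → ℝ)
    (hμ : ∀ S : Finset ι, μ S = ∑ R ∈ S.powerset, m R) :
    (∀ R S : Finset ι, R ⊆ S → μ R ≤ μ S) ↔
    ((∀ i : ι, 0 ≤ m {i}) ∧
      (∀ i : ι, ∀ T : Finset ι, T ⊆ Finset.univ.erase i → T.Nonempty →
        0 ≤ m {i} + ∑ j ∈ T, m {i, j})) := by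
  constructor
  · intro hmono
    constructor
    · intro i
      have h := hmono ∅ {i} (Finset.empty_subset _)
      have h1 : μ ∅ = 0 := by simp [hμ, hm0]
      have h2 : μ {i} = m {i} := by
        have := mu_insert_diff m h2add μ hμ (Finset.notMem_empty i)
        simpa [h1, hm0] using this
      linarith [h, h1, h2]
    · intro i T hT hTne
      have hiT : i ∉ T := fun h => (Finset.mem_erase.mp (hT h)).1 rfl
      have hd := mu_insert_diff m h2add μ hμ hiT
      have h := hmono T (insert i T) (Finset.subset_insert i T)
      linarith
  · rintro ⟨h1, h2⟩ R S hRS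
    have key : ∀ B : Finset ι, ∀ A : Finset ι, Disjoint A B → μ A ≤ μ (A ∪ B) := by
      intro B
      induction B using Finset.induction_on with
      | empty => intro A _; simp
      | @insert j B' hj ih =>
        intro A hdisj
        have hjA : j ∉ A := by
          have := Finset.disjoint_left.mp hdisj
          exact fun h => this h (Finset.mem_insert_self j B')
        have hdisj' : Disjoint A B' := by
          refine Finset.disjoint_left.mpr fun a ha hb => ?_
          exact Finset.disjoint_left.mp hdisj ha (Finset.mem_insert_of_mem hb)
        have h1' : μ A ≤ μ (A ∪ B') := ih A hdisj'
        have hstep : μ (A ∪ B') ≤ μ (insert j (A ∪ B')) := by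
          have hjAB : j ∉ A ∪ B' := by
            simp only [Finset.mem_union, not_or]
            exact ⟨hjA, hj⟩
          have hd := mu_insert_diff m h2add μ hμ hjAB
          rcases Finset.eq_empty_or_nonempty (A ∪ B') with he | hne
          · rw [he] at hd ⊢
            simp only [Finset.sum_empty, add_zero] at hd
            have := h1 j
            linarith
          · have hsub : A ∪ B' ⊆ Finset.univ.erase j := by
              intro x hx
              exact Finset.mem_erase.mpr ⟨fun h => hjAB (h ▸ hx), Finset.mem_univ x⟩
            have := h2 j (A ∪ B') hsub hne
            linarith
        calc μ A ≤ μ (A ∪ B') := h1'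
          _ ≤ μ (insert j (A ∪ B')) := hstep
          _ = μ (A ∪ insert j B') := by rw [Finset.union_insert]
    have hd : Disjoint R (S \ R) := Finset.disjoint_sdiff
    have := key (S \ R) R hd
    rwa [Finset.union_sdiff_of_subset hRS] at this
end

section
/- Let A be a set and 𝒯 a nonempty family of total preorders on A. Define ≿^N = ⋂𝒯 and ≿^P = ⋃𝒯. Then the pair (≿^N, ≿^P) is a NaP-preference, i.e.: (base condition) ≿^N is a preorder; (extension) ≿^P extends ≿^N (a ≿^N b implies a ≿^P b); (transitive coherence) for all a,b,c ∈ A, a ≿^N b and b ≿^P c imply a ≿^P c, and a ≿^P b and b ≿^N c imply a ≿^P c; (mixed completeness) for all a,b ∈ A, a ≿^N b or b ≿^P a. -/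
/-- if `𝒯` is a nonempty family of total preorders on `A`, then the pair
`(⋂𝒯, ⋃𝒯)` is a NaP-preference: the intersection is a preorder, the union extends it,
the two relations are transitively coherent, and mixed completeness holds. -/
theorem inter_union_total_preorders_is_NaP {A : Type*}
    (𝒯 : Set (A → A → Prop)) (h𝒯 : 𝒯.Nonempty)
    (htot : ∀ R ∈ 𝒯, Reflexive R ∧ Transitive R ∧ ∀ a b : A, R a b ∨ R b a)
    (N P : A → A → Prop)
    (hN : ∀ a b : A, N a b ↔ ∀ R ∈ 𝒯, R a b)
    (hP : ∀ a b : A, P a b ↔ ∃ R ∈ 𝒯, R a b) :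
    Reflexive N ∧ Transitive N ∧
    (∀ a b : A, N a b → P a b) ∧
    (∀ a b c : A, N a b → P b c → P a c) ∧
    (∀ a b c : A, P a b → N b c → P a c) ∧
    (∀ a b : A, N a b ∨ P b a) := by
  obtain ⟨R0, hR0⟩ := h𝒯
  refine ⟨?_, ?_, ?_, ?_, ?_, ?_⟩
  · intro a
    exact (hN a a).2 (fun R hR => (htot R hR).1 a)
  · intro a b c hab hbc
    exact (hN a c).2 (fun R hR => (htot R hR).2.1 ((hN a b).1 hab R hR) ((hN b c).1 hbc R hR))
  · intro a b h
    exact (hP a b).2 ⟨R0, hR0, (hN a b).1 h R0 hR0⟩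
  · intro a b c hab hbc
    obtain ⟨R, hR, hbcR⟩ := (hP b c).1 hbc
    exact (hP a c).2 ⟨R, hR, (htot R hR).2.1 ((hN a b).1 hab R hR) hbcR⟩
  · intro a b c hab hbc
    obtain ⟨R, hR, habR⟩ := (hP a b).1 hab
    exact (hP a c).2 ⟨R, hR, (htot R hR).2.1 habR ((hN b c).1 hbc R hR)⟩
  · intro a b
    by_cases h : ∀ R ∈ 𝒯, R a b
    · exact Or.inl ((hN a b).2 h)
    · push_neg at h
      obtain ⟨R, hR, hnab⟩ := h
      exact Or.inr ((hP b a).2 ⟨R, hR, ((htot R hR).2.2 a b).resolve_left hnab⟩)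
end

section
/- Let A be a set and (≿^N, ≿^P) a NaP-preference on A, i.e. a pair of binary relations such that ≿^N is a preorder, ≿^P extends ≿^N, for all a,b,c ∈ A one has (a ≿^N b and b ≿^P c imply a ≿^P c) and (a ≿^P b and b ≿^N c imply a ≿^P c), and for all a,b ∈ A one has a ≿^N b or b ≿^P a. Then there exists a nonempty family 𝒯 of total preorders on A such that ≿^N = ⋂𝒯 and ≿^P = ⋃𝒯. -/
/-- Auxiliary Szpilrajn-type extension lemma: a preorder `Q` avoiding a set of
forbidden pairs `F` (each of which is strictly reversed by `Q`) extends to a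
total preorder still avoiding `F`. -/
lemma aux_total_ext_NaP {A : Type*} (Q F : A → A → Prop)
    (hQr : Reflexive Q) (hQt : Transitive Q)
    (hF : ∀ x y, F x y → Q y x ∧ ¬ Q x y) :
    ∃ R : A → A → Prop, Reflexive R ∧ Transitive R ∧ (∀ a b, R a b ∨ R b a) ∧
      (∀ a b, Q a b → R a b) ∧ (∀ a b, F a b → ¬ R a b) := by
  classical
  set S : Set (Set (A × A)) :=
    {R | (∀ a, (a, a) ∈ R) ∧ (∀ a b c, (a, b) ∈ R → (b, c) ∈ R → (a, c) ∈ R) ∧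
      (∀ a b, Q a b → (a, b) ∈ R) ∧ (∀ a b, F a b → (a, b) ∉ R)} with hSdef
  have hQS : {p : A × A | Q p.1 p.2} ∈ S :=
    ⟨fun a => hQr a, fun a b c h1 h2 => hQt h1 h2, fun a b h => h,
      fun a b hf => (hF a b hf).2⟩
  have hchainub : ∀ c ⊆ S, IsChain (· ⊆ ·) c → c.Nonempty →
      ∃ ub ∈ S, ∀ s ∈ c, s ⊆ ub := by
    intro c hcS hchain hcne
    refine ⟨⋃₀ c, ?_, fun s hs => Set.subset_sUnion_of_mem hs⟩
    obtain ⟨t, htc⟩ := hcne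
    refine ⟨fun a => ⟨t, htc, (hcS htc).1 a⟩, ?_, fun a b h => ⟨t, htc, (hcS htc).2.2.1 a b h⟩, ?_⟩
    · rintro a b cc ⟨s, hsc, hab⟩ ⟨s', hs'c, hbc⟩
      rcases hchain.total hsc hs'c with h | h
      · exact ⟨s', hs'c, (hcS hs'c).2.1 a b cc (h hab) hbc⟩
      · exact ⟨s, hsc, (hcS hsc).2.1 a b cc hab (h hbc)⟩
    · rintro a b hf ⟨s, hsc, hab⟩
      exact (hcS hsc).2.2.2 a b hf hab
  obtain ⟨M, hQM, hMS, hmax⟩ := zorn_subset_nonempty S hchainub _ hQS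
  · obtain ⟨hMr, hMt, hMQ, hMF⟩ := hMS
    refine ⟨fun a b => (a, b) ∈ M, fun a => hMr a, fun a b c h1 h2 => hMt _ _ _ h1 h2,
      ?_, fun a b h => hMQ a b h, fun a b hf => hMF a b hf⟩
    intro u v
    by_contra hcon
    push_neg at hcon
    obtain ⟨huv, hvu⟩ := hcon
    -- extend M by adding (u, v)
    set M' : Set (A × A) := M ∪ {p | (p.1, u) ∈ M ∧ (v, p.2) ∈ M} with hM'def
    have hM'S : M' ∈ S := by
      refine ⟨fun a => Or.inl (hMr a), ?_, fun a b h => Or.inl (hMQ a b h), ?_⟩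
      · rintro a b c (hab | ⟨hau, hvb⟩) (hbc | ⟨hbu, hvc⟩)
        · exact Or.inl (hMt _ _ _ hab hbc)
        · exact Or.inr ⟨hMt _ _ _ hab hbu, hvc⟩
        · exact Or.inr ⟨hau, hMt _ _ _ hvb hbc⟩
        · exact Or.inr ⟨hau, hvc⟩
      · rintro a b hf (hab | ⟨hau, hvb⟩)
        · exact hMF a b hf hab
        · -- Q b a holds, so (b,a) ∈ M; then (v,b),(b,a),(a,u) give (v,u) ∈ M
          have hba : (b, a) ∈ M := hMQ b a (hF a b hf).1
          exact hvu (hMt _ _ _ (hMt _ _ _ hvb hba) hau)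
    have hMM' : M ⊆ M' := fun p hp => Or.inl hp
    have : M' ⊆ M := hmax hM'S hMM'
    exact huv (this (Or.inr ⟨hMr u, hMr v⟩))

/-- every NaP-preference `(≿ᴺ, ≿ᴾ)` on a set `A` arises as the
intersection and the union of a nonempty family `𝒯` of total preorders on `A`. -/
theorem NaP_is_inter_union_of_total_preorders {A : Type*}
    (N P : A → A → Prop)
    (hNrefl : Reflexive N) (hNtrans : Transitive N)
    (hext : ∀ a b : A, N a b → P a b)
    (hcoh₁ : ∀ a b c : A, N a b → P b c → P a c)
    (hcoh₂ : ∀ a b c : A, P a b → N b c → P a c)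
    (hmix : ∀ a b : A, N a b ∨ P b a) :
    ∃ 𝒯 : Set (A → A → Prop), 𝒯.Nonempty ∧
      (∀ R ∈ 𝒯, Reflexive R ∧ Transitive R ∧ ∀ a b : A, R a b ∨ R b a) ∧
      (∀ a b : A, N a b ↔ ∀ R ∈ 𝒯, R a b) ∧
      (∀ a b : A, P a b ↔ ∃ R ∈ 𝒯, R a b) := by
  classical
  -- the family: all total preorders between N and P
  refine ⟨{R | Reflexive R ∧ Transitive R ∧ (∀ a b, R a b ∨ R b a) ∧
      (∀ a b, N a b → R a b) ∧ (∀ a b, R a b → P a b)}, ?_, ?_, ?_, ?_⟩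
  · -- nonempty: extend N itself
    obtain ⟨R, h1, h2, h3, h4, h5⟩ := aux_total_ext_NaP N (fun x y => ¬ P x y)
      hNrefl hNtrans (fun x y hf =>
        ⟨(hmix y x).resolve_right hf, fun h => hf (hext x y h)⟩)
    exact ⟨R, h1, h2, h3, h4, fun a b hab => by_contra fun hP => h5 a b hP hab⟩
  · rintro R ⟨h1, h2, h3, -, -⟩
    exact ⟨h1, h2, h3⟩
  · intro a b
    constructor
    · rintro h R ⟨-, -, -, h4, -⟩
      exact h4 a b h
    · intro h
      by_contra hN
      have hPba : P b a := (hmix a b).resolve_left hN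
      -- build a total preorder containing N ∪ {(b,a)} inside P avoiding (a,b)
      set Q : A → A → Prop := fun s t => N s t ∨ (N s b ∧ N a t) with hQ
      have hQr : Reflexive Q := fun s => Or.inl (hNrefl s)
      have hQt : Transitive Q := by
        rintro s t w (hst | ⟨hsb, hat⟩) (htw | ⟨htb, haw⟩)
        · exact Or.inl (hNtrans hst htw)
        · exact Or.inr ⟨hNtrans hst htb, haw⟩
        · exact Or.inr ⟨hsb, hNtrans hat htw⟩
        · exact Or.inr ⟨hsb, haw⟩
      have hQP : ∀ s t, Q s t → P s t := by
        rintro s t (hst | ⟨hsb, hat⟩)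
        · exact hext s t hst
        · exact hcoh₂ s a t (hcoh₁ s b a hsb hPba) hat
      have hFcond : ∀ x y, (¬ P x y ∨ (x = a ∧ y = b)) → Q y x ∧ ¬ Q x y := by
        rintro x y (hP | ⟨rfl, rfl⟩)
        · have hNyx : N y x := (hmix y x).resolve_right hP
          refine ⟨Or.inl hNyx, ?_⟩
          rintro (hxy | hxy)
          · exact hP (hext x y hxy)
          · exact hP (hQP x y (Or.inr hxy))
        · refine ⟨Or.inr ⟨hNrefl y, hNrefl x⟩, ?_⟩
          rintro (hxy | ⟨hxy, -⟩) <;> exact hN hxy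
      obtain ⟨R, h1, h2, h3, h4, h5⟩ := aux_total_ext_NaP Q
        (fun x y => ¬ P x y ∨ (x = a ∧ y = b)) hQr hQt hFcond
      refine absurd (h (R := R) ⟨h1, h2, h3, fun s t hst => h4 s t (Or.inl hst),
        fun s t hst => by_contra fun hP => h5 s t (Or.inl hP) hst⟩) ?_
      exact h5 a b (Or.inr ⟨rfl, rfl⟩)
  · intro a b
    constructor
    · intro hPab
      set Q : A → A → Prop := fun s t => N s t ∨ (N s a ∧ N b t) with hQ
      have hQr : Reflexive Q := fun s => Or.inl (hNrefl s)
      have hQt : Transitive Q := by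
        rintro s t w (hst | ⟨hsa, hbt⟩) (htw | ⟨hta, hbw⟩)
        · exact Or.inl (hNtrans hst htw)
        · exact Or.inr ⟨hNtrans hst hta, hbw⟩
        · exact Or.inr ⟨hsa, hNtrans hbt htw⟩
        · exact Or.inr ⟨hsa, hbw⟩
      have hQP : ∀ s t, Q s t → P s t := by
        rintro s t (hst | ⟨hsa, hbt⟩)
        · exact hext s t hst
        · exact hcoh₂ s b t (hcoh₁ s a b hsa hPab) hbt
      have hFcond : ∀ x y, ¬ P x y → Q y x ∧ ¬ Q x y := by
        intro x y hP
        have hNyx : N y x := (hmix y x).resolve_right hP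
        exact ⟨Or.inl hNyx, fun hxy => hP (hQP x y hxy)⟩
      obtain ⟨R, h1, h2, h3, h4, h5⟩ := aux_total_ext_NaP Q (fun x y => ¬ P x y)
        hQr hQt hFcond
      exact ⟨R, ⟨h1, h2, h3, fun s t hst => h4 s t (Or.inl hst),
        fun s t hst => by_contra fun hP => h5 s t hP hst⟩,
        h4 a b (Or.inr ⟨hNrefl a, hNrefl b⟩)⟩
    · rintro ⟨R, ⟨-, -, -, -, h5⟩, hab⟩
      exact h5 a b hab
end
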